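/- Let U = {(x₁,x₂) : |x₁| < a, |x₂| < b} be a rectangle with b < a, and let ρ(x₁,x₂) = (x₂ - a + b, x₁ + a - b) be the reflection across the bisector x₂ = x₁ + a - b at the corner (-a,-b). Then for 2 ≤ p < ∞ and any point x in the region D := {x ∈ U : x₂ < x₁ + a - b, -a < x₁ < -a + 2b}, the p-distance satisfies d_p(ρ(x), ∂U) ≤ d_p(x, ∂U). -/
import Mathlib


open Set

/-- The `p`-norm on `ℝ²`. -/
noncomputable def gammaP (p : ℝ) (x : ℝ × ℝ) : ℝ :=
  (|x.1| ^ p + |x.2| ^ p) ^ (1 / p)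

/-- The `p`-distance to the boundary of `U`. -/
noncomputable def dP (p : ℝ) (U : Set (ℝ × ℝ)) (x : ℝ × ℝ) : ℝ :=
  sInf {t : ℝ | ∃ y ∈ frontier U, t = gammaP p (x - y)}

lemma gammaP_nonneg (p : ℝ) (v : ℝ × ℝ) : 0 ≤ gammaP p v := by
  unfold gammaP
  positivity

lemma rpow_self_inv (p : ℝ) (hp : 0 < p) (d : ℝ) (hd : 0 ≤ d) :
    (d ^ p) ^ (1 / p) = d := by
  rw [← Real.rpow_mul hd, mul_one_div_cancel hp.ne', Real.rpow_one]

lemma gammaP_fst_le (p : ℝ) (hp : 0 < p) (v : ℝ × ℝ) : |v.1| ≤ gammaP p v := by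
  unfold gammaP
  calc |v.1| = (|v.1| ^ p) ^ (1 / p) := (rpow_self_inv p hp _ (abs_nonneg _)).symm
    _ ≤ (|v.1| ^ p + |v.2| ^ p) ^ (1 / p) := by
        apply Real.rpow_le_rpow (by positivity)
          (le_add_of_nonneg_right (by positivity)) (by positivity)

lemma gammaP_snd_le (p : ℝ) (hp : 0 < p) (v : ℝ × ℝ) : |v.2| ≤ gammaP p v := by
  unfold gammaP
  calc |v.2| = (|v.2| ^ p) ^ (1 / p) := (rpow_self_inv p hp _ (abs_nonneg _)).symm
    _ ≤ (|v.1| ^ p + |v.2| ^ p) ^ (1 / p) := by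
        apply Real.rpow_le_rpow (by positivity)
          (le_add_of_nonneg_left (by positivity)) (by positivity)

lemma gammaP_horiz (p : ℝ) (hp : 0 < p) (d : ℝ) : gammaP p (d, 0) = |d| := by
  unfold gammaP
  simp only [abs_zero, Real.zero_rpow hp.ne']
  rw [add_zero, rpow_self_inv p hp _ (abs_nonneg _)]

lemma gammaP_vert (p : ℝ) (hp : 0 < p) (d : ℝ) : gammaP p (0, d) = |d| := by
  unfold gammaP
  simp only [abs_zero, Real.zero_rpow hp.ne']
  rw [zero_add, rpow_self_inv p hp _ (abs_nonneg _)]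

lemma frontier_rect (a b : ℝ) (ha : 0 < a) (hb : 0 < b)
    (U : Set (ℝ × ℝ)) (hU : U = {x : ℝ × ℝ | |x.1| < a ∧ |x.2| < b}) :
    frontier U = (Icc (-a) a ×ˢ ({-b, b} : Set ℝ)) ∪ (({-a, a} : Set ℝ) ×ˢ Icc (-b) b) := by
  have hU' : U = Ioo (-a) a ×ˢ Ioo (-b) b := by
    rw [hU]; ext y; simp [Set.mem_prod, abs_lt, and_assoc]
  rw [hU', frontier_prod_eq, frontier_Ioo (by linarith : -a < a),
    frontier_Ioo (by linarith : -b < b),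
    closure_Ioo (by linarith : (-a : ℝ) ≠ a), closure_Ioo (by linarith : (-b : ℝ) ≠ b)]

lemma dP_formula (a b p : ℝ) (ha : 0 < a) (hb : 0 < b) (hp : 0 < p)
    (U : Set (ℝ × ℝ)) (hU : U = {x : ℝ × ℝ | |x.1| < a ∧ |x.2| < b})
    (x : ℝ × ℝ) (hx1 : |x.1| < a) (hx2 : |x.2| < b) :
    dP p U x = min (a - |x.1|) (b - |x.2|) := by
  have hF := frontier_rect a b ha hb U hU
  have hbdd : BddBelow {t : ℝ | ∃ y ∈ frontier U, t = gammaP p (x - y)} := by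
    refine ⟨0, fun t ht => ?_⟩
    obtain ⟨y, _, rfl⟩ := ht
    exact gammaP_nonneg p _
  -- membership of the four edge-foot points
  have hmemx2 : x.2 ∈ Icc (-b) b := ⟨by cases abs_lt.1 hx2; linarith, (le_abs_self _).trans hx2.le⟩
  have hmemx1 : x.1 ∈ Icc (-a) a := ⟨by cases abs_lt.1 hx1; linarith, (le_abs_self _).trans hx1.le⟩
  have upper : ∀ s : ℝ, (s = a ∨ s = -a) → dP p U x ≤ |x.1 - s| := by
    intro s hs
    apply csInf_le hbdd
    refine ⟨(s, x.2), ?_, ?_⟩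
    · rw [hF]
      exact Or.inr ⟨by rcases hs with rfl | rfl <;> simp, hmemx2⟩
    · have : x - (s, x.2) = (x.1 - s, 0) := by
        simp [Prod.ext_iff]
      rw [this, gammaP_horiz p hp]
  have upper2 : ∀ s : ℝ, (s = b ∨ s = -b) → dP p U x ≤ |x.2 - s| := by
    intro s hs
    apply csInf_le hbdd
    refine ⟨(x.1, s), ?_, ?_⟩
    · rw [hF]
      exact Or.inl ⟨hmemx1, by rcases hs with rfl | rfl <;> simp⟩
    · have : x - (x.1, s) = (0, x.2 - s) := by
        simp [Prod.ext_iff]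
      rw [this, gammaP_vert p hp]
  apply le_antisymm
  · apply le_min
    · rcases abs_cases x.1 with ⟨h, h0⟩ | ⟨h, h0⟩
      · have := upper a (Or.inl rfl)
        rw [abs_of_nonpos (by linarith)] at this
        linarith
      · have := upper (-a) (Or.inr rfl)
        rw [abs_of_nonneg (by linarith)] at this
        linarith
    · rcases abs_cases x.2 with ⟨h, h0⟩ | ⟨h, h0⟩
      · have := upper2 b (Or.inl rfl)
        rw [abs_of_nonpos (by linarith)] at this
        linarith
      · have := upper2 (-b) (Or.inr rfl)
        rw [abs_of_nonneg (by linarith)] at this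
        linarith
  · apply le_csInf
    · exact ⟨_, ⟨(a, x.2), by rw [hF]; exact Or.inr ⟨by simp, hmemx2⟩, rfl⟩⟩
    · rintro t ⟨y, hy, rfl⟩
      rw [hF] at hy
      rcases hy with ⟨_, hy2⟩ | ⟨hy1, _⟩
      · refine le_trans (min_le_right _ _) (le_trans ?_ (gammaP_snd_le p hp (x - y)))
        have h2 : |y.2| = b := by rcases hy2 with h | h <;> rw [h] <;> simp [abs_of_pos hb, hb.le]
        have : |y.2| - |x.2| ≤ |x.2 - y.2| := by
          have := abs_sub_abs_le_abs_sub y.2 x.2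
          rw [abs_sub_comm] at this
          linarith
        simpa using by linarith [this, h2.ge, h2.le]
      · refine le_trans (min_le_left _ _) (le_trans ?_ (gammaP_fst_le p hp (x - y)))
        have h1 : |y.1| = a := by rcases hy1 with h | h <;> rw [h] <;> simp [abs_of_pos ha, ha.le]
        have : |y.1| - |x.1| ≤ |x.1 - y.1| := by
          have := abs_sub_abs_le_abs_sub y.1 x.1
          rw [abs_sub_comm] at this
          linarith
        simpa using by linarith [this, h1.ge, h1.le]

/-- In the rectangle `|x₁| < a`, `|x₂| < b` with `b < a`, the reflection
`ρ(x₁,x₂) = (x₂ - a + b, x₁ + a - b)` across the corner bisector does not increase the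
`p`-distance to the boundary on the region `D`. -/
theorem reflection_decreases_dP
    (a b : ℝ) (hb : 0 < b) (hba : b < a) (p : ℝ) (hp : 2 ≤ p)
    (U : Set (ℝ × ℝ)) (hU : U = {x : ℝ × ℝ | |x.1| < a ∧ |x.2| < b})
    (x : ℝ × ℝ)
    (hxD : x ∈ U ∧ x.2 < x.1 + a - b ∧ -a < x.1 ∧ x.1 < -a + 2 * b) :
    dP p U (x.2 - a + b, x.1 + a - b) ≤ dP p U x := by
  have ha : 0 < a := hb.trans hba
  have hp0 : 0 < p := by linarith
  obtain ⟨hxU, hdiag, hl, hr⟩ := hxD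
  rw [hU] at hxU
  obtain ⟨hx1, hx2⟩ := hxU
  have hx2' := abs_lt.1 hx2
  have hx1' := abs_lt.1 hx1
  have hρ1 : |x.2 - a + b| < a := abs_lt.2 ⟨by linarith, by linarith⟩
  have hρ2 : |x.1 + a - b| < b := abs_lt.2 ⟨by linarith, by linarith⟩
  rw [dP_formula a b p ha hb hp0 U hU x hx1 hx2,
    dP_formula a b p ha hb hp0 U hU _ hρ1 hρ2]
  simp only
  have k1 : b - |x.1 + a - b| ≤ 2 * b - a - x.1 := by
    have := le_abs_self (x.1 + a - b); linarith
  have k2 : b - |x.1 + a - b| ≤ a + x.1 := by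
    have := neg_abs_le (x.1 + a - b); linarith
  have k3 : a - |x.2 - a + b| ≤ b + x.2 := by
    have := neg_abs_le (x.2 - a + b); linarith
  apply le_min
  · rcases abs_cases x.1 with ⟨h, h0⟩ | ⟨h, h0⟩ <;> rw [h]
    · exact le_trans (min_le_right _ _) (by linarith)
    · exact le_trans (min_le_right _ _) (by linarith)
  · rcases abs_cases x.2 with ⟨h, h0⟩ | ⟨h, h0⟩ <;> rw [h]
    · exact le_trans (min_le_right _ _) (by linarith)
    · exact le_trans (min_le_left _ _) (by linarith)
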